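/- Let f be homogeneous of degree ν > 0 with respect to (λ^r, λ^q) and let ℓ : ℝ^n × ℝ^m → [0,∞] satisfy ℓ(λ^r(ε)x, λ^q(ε)u) = ε^μ ℓ(x,u) for all x,u,ε>0. Then for any x, ε > 0, input sequence u, and time k, ℓ(φ(k, λ^r(ε)x, Λ(ε)u), λ^q(ε)^(ν^k) u_k) = ε^(μ ν^k) ℓ(φ(k, x, u), u_k), where Λ(ε)u is the input sequence with k-th element λ^q(ε)^(ν^k) u_k. -/

import Mathlib

open scoped ENNReal

noncomputable section

def dil {n : ℕ} (r : Fin n → ℝ) (ε : ℝ) (x : Fin n → ℝ) : Fin n → ℝ :=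
  fun i => ε ^ (r i) * x i

def dilPow {n : ℕ} (r : Fin n → ℝ) (ε c : ℝ) (x : Fin n → ℝ) : Fin n → ℝ :=
  fun i => ε ^ (c * r i) * x i

def sol {n m : ℕ} (f : (Fin n → ℝ) → (Fin m → ℝ) → Fin n → ℝ)
    (u : ℕ → Fin m → ℝ) (x : Fin n → ℝ) : ℕ → Fin n → ℝ
  | 0 => x
  | k + 1 => f (sol f u x k) (u k)

/-
Homogeneity of `f` turns the dilation `λ^r(ε)^(ν^k)` of the state at time `k` into the
dilation `λ^r(ε)^(ν^(k+1))` at time `k+1`, provided the input at time `k` is dilated by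
`λ^q(ε)^(ν^k)`. By induction the whole trajectory is dilated, and homogeneity of `ℓ` with
the rescaled parameter `ε^(ν^k)` gives the factor `ε^(μ ν^k)`.
-/

section Dilation

variable {n : ℕ} (r : Fin n → ℝ)

lemma dilPow_one (ε : ℝ) (x : Fin n → ℝ) : dilPow r ε 1 x = dil r ε x := by
  funext i
  simp only [dilPow, dil, one_mul]

lemma dilPow_eq_dil {ε : ℝ} (hε : 0 < ε) (c : ℝ) (x : Fin n → ℝ) :
    dilPow r ε c x = dil r (ε ^ c) x := by
  funext i
  simp [dilPow, dil, Real.rpow_mul hε.le]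

lemma dilPow_rpow {ε : ℝ} (hε : 0 < ε) (a b : ℝ) (x : Fin n → ℝ) :
    dilPow r (ε ^ a) b x = dilPow r ε (a * b) x := by
  funext i
  simp [dilPow, ← Real.rpow_mul hε.le, mul_assoc]

end Dilation

lemma sol_dil_eq_dilPow {n m : ℕ} {f : (Fin n → ℝ) → (Fin m → ℝ) → Fin n → ℝ}
    {r : Fin n → ℝ} {q : Fin m → ℝ} {ν : ℝ}
    (hf : ∀ x u (ε : ℝ), 0 < ε → f (dil r ε x) (dil q ε u) = dilPow r ε ν (f x u))
    (x : Fin n → ℝ) {ε : ℝ} (hε : 0 < ε) (u : ℕ → Fin m → ℝ) (k : ℕ) :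
    sol f (fun j => dilPow q ε (ν ^ j) (u j)) (dil r ε x) k
      = dilPow r ε (ν ^ k) (sol f u x k) := by
  induction k with
  | zero => simp only [sol, pow_zero, dilPow_one]
  | succ k ih =>
    simp only [sol, ih]
    rw [dilPow_eq_dil r hε, dilPow_eq_dil q hε, hf _ _ _ (Real.rpow_pos_of_pos hε _),
      dilPow_rpow r hε, pow_succ]

theorem stmt1_general {n m : ℕ} (f : (Fin n → ℝ) → (Fin m → ℝ) → Fin n → ℝ)
    (ℓ : (Fin n → ℝ) → (Fin m → ℝ) → ℝ≥0∞)
    (r : Fin n → ℝ) (q : Fin m → ℝ) (ν μ : ℝ)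
    (hf : ∀ x u (ε : ℝ), 0 < ε → f (dil r ε x) (dil q ε u) = dilPow r ε ν (f x u))
    (hℓ : ∀ x u (ε : ℝ), 0 < ε →
      ℓ (dil r ε x) (dil q ε u) = ENNReal.ofReal (ε ^ μ) * ℓ x u) :
    ∀ (x : Fin n → ℝ) (ε : ℝ), 0 < ε → ∀ (u : ℕ → Fin m → ℝ) (k : ℕ),
      ℓ (sol f (fun j => dilPow q ε (ν ^ j) (u j)) (dil r ε x) k)
          (dilPow q ε (ν ^ k) (u k))
        = ENNReal.ofReal (ε ^ (μ * ν ^ k)) * ℓ (sol f u x k) (u k) := by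
  intro x ε hε u k
  rw [sol_dil_eq_dilPow hf x hε u k, dilPow_eq_dil r hε, dilPow_eq_dil q hε,
    hℓ _ _ _ (Real.rpow_pos_of_pos hε _), ← Real.rpow_mul hε.le, mul_comm μ]

theorem stmt1 {n m : ℕ} (f : (Fin n → ℝ) → (Fin m → ℝ) → Fin n → ℝ)
    (ℓ : (Fin n → ℝ) → (Fin m → ℝ) → ℝ≥0∞)
    (r : Fin n → ℝ) (q : Fin m → ℝ) (ν μ : ℝ)
    (hr : ∀ i, 0 < r i) (hq : ∀ j, 0 < q j) (hν : 0 < ν)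
    (hf : ∀ x u (ε : ℝ), 0 < ε → f (dil r ε x) (dil q ε u) = dilPow r ε ν (f x u))
    (hℓ : ∀ x u (ε : ℝ), 0 < ε →
      ℓ (dil r ε x) (dil q ε u) = ENNReal.ofReal (ε ^ μ) * ℓ x u) :
    ∀ (x : Fin n → ℝ) (ε : ℝ), 0 < ε → ∀ (u : ℕ → Fin m → ℝ) (k : ℕ),
      ℓ (sol f (fun j => dilPow q ε (ν ^ j) (u j)) (dil r ε x) k)
          (dilPow q ε (ν ^ k) (u k))
        = ENNReal.ofReal (ε ^ (μ * ν ^ k)) * ℓ (sol f u x k) (u k) :=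
  stmt1_general f ℓ r q ν μ hf hℓ
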